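/- arXiv:2010.03000 — 3 statements merged into one kernel-verified Lean document; each statement's English description precedes it below -/
import Mathlib

section
/- Let X be a topological space and let f_t, t ∈ [0,1], be a continuous loop of homeomorphisms of X based at the identity (f_0 = f_1 = id). Then for every x ∈ X, the loop t ↦ f_t(x) represents an element of the center of the fundamental group π₁(X, x). -/
/-!
Read `F` as a homotopy `H` from `id` to `id`. For any loop `δ` at `x`, the square `δ × [0, 1]`
mapped by `H` has `δ` on its bottom and top edges and `γ` on both vertical edges, so
`δ · γ ≃ γ · δ`: this is the naturality square of the homotopy `H`, viewed as a natural
transformation of the identity functor of the fundamental groupoid.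
-/

open CategoryTheory FundamentalGroupoid

theorem ContinuousMap.Homotopy.evalAt_mem_center {X : Type*} [TopologicalSpace X]
    (H : (ContinuousMap.id X).Homotopy (ContinuousMap.id X)) (x : X) :
    FundamentalGroup.fromPath ⟦H.evalAt x⟧ ∈ Subgroup.center (FundamentalGroup X x) := by
  refine Subgroup.mem_center_iff.mpr fun p => ?_
  obtain ⟨hleft, hright⟩ := eq_diag_path (X := TopCat.of X) (Y := TopCat.of X) H (x₀ := x) (x₁ := x) p
  have hid : (πₘ (TopCat.ofHom (ContinuousMap.id X))).map p = p :=
    Quotient.inductionOn p fun _ => rfl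
  exact (hid ▸ hleft.trans hright.symm).symm

def ContinuousMap.Homotopy.ofLoop {X : Type*} [TopologicalSpace X]
    (F : unitInterval → X → X) (hcont : Continuous fun p : X × unitInterval => F p.2 p.1)
    (h0 : ∀ x : X, F 0 x = x) (h1 : ∀ x : X, F 1 x = x) :
    (ContinuousMap.id X).Homotopy (ContinuousMap.id X) where
  toFun p := F p.1 p.2
  continuous_toFun := hcont.comp continuous_swap
  map_zero_left := h0
  map_one_left := h1

theorem loop_of_homeos_gives_central_element_general {X : Type*} [TopologicalSpace X]
    (F : unitInterval → X → X)
    (hcont : Continuous fun p : X × unitInterval => F p.2 p.1)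
    (h0 : ∀ x : X, F 0 x = x) (h1 : ∀ x : X, F 1 x = x)
    (x : X) (γ : Path x x) (hγ : ∀ t : unitInterval, γ t = F t x) :
    @FundamentalGroup.fromPath (TopCat.of X) _ x ⟦γ⟧ ∈
      Subgroup.center (FundamentalGroup X x) := by
  have hγH : γ = (ContinuousMap.Homotopy.ofLoop F hcont h0 h1).evalAt x := Path.ext (funext hγ)
  rw [hγH]
  exact (ContinuousMap.Homotopy.ofLoop F hcont h0 h1).evalAt_mem_center x

/-- If `F : X × [0,1] → X` is a continuous loop of homeomorphisms based at
the identity (`F 0 = F 1 = id`, each `F t` a homeomorphism), then for every `x : X` the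
loop `t ↦ F t x` represents an element of the center of `π₁(X, x)`. -/
theorem loop_of_homeos_gives_central_element {X : Type*} [TopologicalSpace X]
    (F : unitInterval → X → X)
    (hcont : Continuous fun p : X × unitInterval => F p.2 p.1)
    (hhomeo : ∀ t : unitInterval, IsHomeomorph (F t))
    (h0 : ∀ x : X, F 0 x = x) (h1 : ∀ x : X, F 1 x = x)
    (x : X) (γ : Path x x) (hγ : ∀ t : unitInterval, γ t = F t x) :
    @FundamentalGroup.fromPath (TopCat.of X) _ x ⟦γ⟧ ∈
      Subgroup.center (FundamentalGroup X x) :=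
  loop_of_homeos_gives_central_element_general F hcont h0 h1 x γ hγ
end

section
/- Let (M, d_g) be a metric space induced by a Riemannian metric g on a compact manifold, and let D ⊆ M be a closed nonempty subset. Define a new length structure on M − D by rescaling: the length of a piecewise smooth path γ is ∫ |γ'(t)|_g / d_g(γ(t), D) dt. Then the resulting metric space (M − D, g_b) is complete. -/
open MeasureTheory Metric

/-- A path `γ : [0, l] → M` avoiding `D`, with nonnegative speed bound `v` (in the
metric of `M`, playing the role of `|γ'|_g`). -/
def IsAdmissiblePath {M : Type*} [MetricSpace M] (D : Set M)
    (γ : ℝ → M) (v : ℝ → ℝ) (l : ℝ) : Prop :=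
  (∀ t ∈ Set.Icc (0 : ℝ) l, γ t ∉ D) ∧ (∀ t : ℝ, 0 ≤ v t) ∧
    ∀ s t : ℝ, s ∈ Set.Icc (0 : ℝ) l → t ∈ Set.Icc (0 : ℝ) l → s ≤ t →
      dist (γ s) (γ t) ≤ ∫ u in s..t, v u

/-- The length of the path `(γ, v)` in the conformally rescaled metric
`g_b = g / d(·, D)`. -/
noncomputable def rescaledLength {M : Type*} [MetricSpace M] (D : Set M)
    (γ : ℝ → M) (v : ℝ → ℝ) (l : ℝ) : ℝ :=
  ∫ u in (0 : ℝ)..l, v u / infDist (γ u) D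

open Set Filter intervalIntegral

namespace RescaledAux

variable {M : Type*} [MetricSpace M]

lemma exp_neg_le {x : ℝ} (h0 : 0 ≤ x) (h1 : x ≤ 1/2) : Real.exp (-(2*x)) ≤ 1 - x := by
  have h2 : 1 + 2*x ≤ Real.exp (2*x) := by linarith [Real.add_one_le_exp (2*x)]
  have h3 : (0:ℝ) < 1 + 2*x := by linarith
  have h4 : (1 + 2*x)⁻¹ ≤ 1 - x := by
    rw [inv_le_iff_one_le_mul₀ h3]
    nlinarith
  calc Real.exp (-(2*x)) = (Real.exp (2*x))⁻¹ := by rw [Real.exp_neg]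
    _ ≤ (1 + 2*x)⁻¹ := by
        apply inv_anti₀ h3 h2
    _ ≤ 1 - x := h4

variable {M : Type*} [MetricSpace M]

lemma shift_admissible {D : Set M} {γ : ℝ → M} {v : ℝ → ℝ} {l s t : ℝ}
    (h : IsAdmissiblePath D γ v l) (hs : 0 ≤ s) (ht : t ≤ l) (hst : s ≤ t) :
    IsAdmissiblePath D (fun u => γ (u + s)) (fun u => v (u + s)) (t - s) := by
  obtain ⟨h1, h2, h3⟩ := h
  refine ⟨fun u hu => h1 (u+s) ⟨by linarith [hu.1], by linarith [hu.2]⟩, fun u => h2 _, ?_⟩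
  intro a b ha hb hab
  have := h3 (a+s) (b+s) ⟨by linarith [ha.1], by linarith [ha.2]⟩
    ⟨by linarith [hb.1], by linarith [hb.2]⟩ (by linarith)
  rw [intervalIntegral.integral_comp_add_right]
  exact this

lemma shift_length {D : Set M} (γ : ℝ → M) (v : ℝ → ℝ) (s t : ℝ) :
    rescaledLength D (fun u => γ (u + s)) (fun u => v (u + s)) (t - s)
      = ∫ u in s..t, v u / infDist (γ u) D := by
  unfold rescaledLength
  have := intervalIntegral.integral_comp_add_right
    (a := (0:ℝ)) (b := t - s) (fun u => v u / infDist (γ u) D) s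
  simpa using this


/-- If `v/f∘γ` is interval-integrable along an admissible path, then so is `v`. -/
lemma v_integrable {D : Set M} {γ : ℝ → M} {v : ℝ → ℝ} {l C : ℝ}
    (hDcl : IsClosed D) (hDne : D.Nonempty) (hl : 0 ≤ l) (h : IsAdmissiblePath D γ v l)
    (hC : 0 < C) (hfC : ∀ z : M, infDist z D ≤ C)
    (hw : IntervalIntegrable (fun u => v u / infDist (γ u) D) volume 0 l) :
    IntervalIntegrable v volume 0 l := by
  set w : ℝ → ℝ := fun u => v u / infDist (γ u) D with hwdef
  have hfpos : ∀ t ∈ Icc (0:ℝ) l, 0 < infDist (γ t) D := fun t ht =>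
    (hDcl.notMem_iff_infDist_pos hDne).1 (h.1 t ht)
  have hwnn : ∀ u, 0 ≤ w u := fun u => div_nonneg (h.2.1 u) infDist_nonneg
  have hvw : ∀ u ∈ Icc (0:ℝ) l, v u ≤ C * w u := by
    intro u hu
    have hf := hfpos u hu
    have : v u = w u * infDist (γ u) D := by
      rw [hwdef]; field_simp
    rw [this, mul_comm C (w u)]
    exact mul_le_mul_of_nonneg_left (hfC _) (hwnn u)
  have hsub : ∀ s t : ℝ, s ∈ Icc (0:ℝ) l → t ∈ Icc (0:ℝ) l →
      IntervalIntegrable w volume s t := by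
    intro s t hs ht
    apply hw.mono_set
    rw [uIcc_of_le hl]
    exact uIcc_subset_Icc hs ht
  -- integral comparison
  have step1 : ∀ s t : ℝ, s ∈ Icc (0:ℝ) l → t ∈ Icc (0:ℝ) l → s ≤ t →
      ∫ u in s..t, v u ≤ C * ∫ u in s..t, w u := by
    intro s t hs ht hst
    by_cases hint : IntervalIntegrable v volume s t
    · rw [← intervalIntegral.integral_const_mul]
      apply intervalIntegral.integral_mono_on hst hint ((hsub s t hs ht).const_mul C)
      intro x hx
      exact hvw x ⟨le_trans hs.1 hx.1, le_trans hx.2 ht.2⟩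
    · rw [intervalIntegral.integral_undef hint]
      exact mul_nonneg hC.le (intervalIntegral.integral_nonneg hst fun u _ => hwnn u)
  set F : ℝ → ℝ := fun t => ∫ u in (0:ℝ)..t, w u with hFdef
  have hwIcc : IntegrableOn w (Icc 0 l) volume := by
    rw [integrableOn_Icc_iff_integrableOn_Ioc]
    rw [intervalIntegrable_iff, uIoc_of_le hl] at hw
    exact hw
  have hFcont : ContinuousOn F (Icc 0 l) := by
    have := intervalIntegral.continuousOn_primitive_interval
      (a := 0) (b := l) (f := w) (μ := volume) (by rwa [uIcc_of_le hl])
    rwa [uIcc_of_le hl] at this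
  have hFsub : ∀ s t : ℝ, s ∈ Icc (0:ℝ) l → t ∈ Icc (0:ℝ) l →
      ∫ u in s..t, w u = F t - F s := by
    intro s t hs ht
    have h1 := intervalIntegral.integral_add_adjacent_intervals
      (hsub 0 s (left_mem_Icc.2 hl) hs) (hsub s t hs ht)
    simp only [hFdef]; linarith [h1]
  have hdist : ∀ s t : ℝ, s ∈ Icc (0:ℝ) l → t ∈ Icc (0:ℝ) l →
      dist (γ s) (γ t) ≤ C * |F t - F s| := by
    intro s t hs ht
    rcases le_total s t with hst | hst
    · calc dist (γ s) (γ t) ≤ ∫ u in s..t, v u := h.2.2 s t hs ht hst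
        _ ≤ C * ∫ u in s..t, w u := step1 s t hs ht hst
        _ = C * (F t - F s) := by rw [hFsub s t hs ht]
        _ ≤ C * |F t - F s| := mul_le_mul_of_nonneg_left (le_abs_self _) hC.le
    · rw [dist_comm]
      calc dist (γ t) (γ s) ≤ ∫ u in t..s, v u := h.2.2 t s ht hs hst
        _ ≤ C * ∫ u in t..s, w u := step1 t s ht hs hst
        _ = C * (F s - F t) := by rw [hFsub t s ht hs]
        _ ≤ C * |F t - F s| := by
            rw [abs_sub_comm]
            exact mul_le_mul_of_nonneg_left (le_abs_self _) hC.le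
  have hγcont : ContinuousOn γ (Icc 0 l) := by
    intro t₀ ht₀
    have hF0 : Tendsto (fun t => C * |F t - F t₀|) (nhdsWithin t₀ (Icc 0 l)) (nhds 0) := by
      have h1 : Tendsto F (nhdsWithin t₀ (Icc 0 l)) (nhds (F t₀)) := hFcont t₀ ht₀
      have h2 : Tendsto (fun t => C * |F t - F t₀|) (nhdsWithin t₀ (Icc 0 l))
          (nhds (C * |F t₀ - F t₀|)) := ((h1.sub_const _).abs.const_mul C)
      simpa using h2
    have : Tendsto (fun t => dist (γ t) (γ t₀)) (nhdsWithin t₀ (Icc 0 l)) (nhds 0) := by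
      apply squeeze_zero' (Filter.Eventually.of_forall fun t => dist_nonneg) _ hF0
      filter_upwards [self_mem_nhdsWithin] with t ht
      calc dist (γ t) (γ t₀) ≤ C * |F t₀ - F t| := hdist t t₀ ht ht₀
        _ = C * |F t - F t₀| := by rw [abs_sub_comm]
    exact tendsto_iff_dist_tendsto_zero.2 this
  -- conclude
  rw [intervalIntegrable_iff, uIoc_of_le hl]
  have hfγ : ContinuousOn (fun u => infDist (γ u) D) (Icc 0 l) :=
    (continuous_infDist_pt D).comp_continuousOn hγcont
  have hwae : IntegrableOn w (Ioc 0 l) volume := by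
    rw [intervalIntegrable_iff, uIoc_of_le hl] at hw; exact hw
  have hprod : IntegrableOn (fun u => w u * infDist (γ u) D) (Ioc 0 l) volume := by
    apply Integrable.mono' (hwae.const_mul C)
    · exact hwae.aestronglyMeasurable.mul
        ((hfγ.mono Ioc_subset_Icc_self).aestronglyMeasurable measurableSet_Ioc)
    · filter_upwards [ae_restrict_mem measurableSet_Ioc] with u hu
      have h1 : (0:ℝ) ≤ w u * infDist (γ u) D :=
        mul_nonneg (hwnn u) infDist_nonneg
      rw [Real.norm_eq_abs, abs_of_nonneg h1, mul_comm C (w u)]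
      exact mul_le_mul_of_nonneg_left (hfC _) (hwnn u)
  apply hprod.congr_fun _ measurableSet_Ioc
  intro u hu
  have hf := hfpos u (Ioc_subset_Icc_self hu)
  rw [hwdef]; field_simp

/-- Main quantitative estimate: total `v`-integral controlled by rescaled length. -/
lemma path_estimates {D : Set M} {γ : ℝ → M} {v : ℝ → ℝ} {l : ℝ}
    (hDcl : IsClosed D) (hDne : D.Nonempty) (hl : 0 ≤ l) (h : IsAdmissiblePath D γ v l)
    (hv : IntervalIntegrable v volume 0 l)
    (hw : IntervalIntegrable (fun u => v u / infDist (γ u) D) volume 0 l)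
    (hL : rescaledLength D γ v l ≤ 1/2) :
    ∫ u in (0:ℝ)..l, v u ≤ 2 * rescaledLength D γ v l * infDist (γ 0) D := by
  set w : ℝ → ℝ := fun u => v u / infDist (γ u) D with hwdef
  set fa : ℝ := infDist (γ 0) D with hfadef
  set I : ℝ := ∫ u in (0:ℝ)..l, v u with hIdef
  set L : ℝ := rescaledLength D γ v l with hLdef
  have hfpos : ∀ t ∈ Icc (0:ℝ) l, 0 < infDist (γ t) D := fun t ht =>
    (hDcl.notMem_iff_infDist_pos hDne).1 (h.1 t ht)
  have hfa : 0 < fa := hfpos 0 (left_mem_Icc.2 hl)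
  have hInn : 0 ≤ I := intervalIntegral.integral_nonneg hl fun u _ => h.2.1 u
  have hS : 0 < fa + I := by linarith
  have hvsub : ∀ s t : ℝ, s ∈ Icc (0:ℝ) l → t ∈ Icc (0:ℝ) l →
      IntervalIntegrable v volume s t := by
    intro s t hs ht
    apply hv.mono_set
    rw [uIcc_of_le hl]
    exact uIcc_subset_Icc hs ht
  have hfub : ∀ t ∈ Icc (0:ℝ) l, infDist (γ t) D ≤ fa + I := by
    intro t ht
    have h1 : infDist (γ t) D ≤ fa + dist (γ t) (γ 0) := infDist_le_infDist_add_dist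
    have h2 : dist (γ 0) (γ t) ≤ ∫ u in (0:ℝ)..t, v u :=
      h.2.2 0 t (left_mem_Icc.2 hl) ht ht.1
    have h3 : (∫ u in (0:ℝ)..t, v u) ≤ I := by
      have hadd := intervalIntegral.integral_add_adjacent_intervals
        (hvsub 0 t (left_mem_Icc.2 hl) ht) (hvsub t l ht (right_mem_Icc.2 hl))
      have hnn : 0 ≤ ∫ u in t..l, v u :=
        intervalIntegral.integral_nonneg ht.2 fun u _ => h.2.1 u
      rw [hIdef]; linarith [hadd]
    rw [dist_comm (γ t) (γ 0)] at h1
    linarith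
  have hmono : (∫ u in (0:ℝ)..l, v u / (fa + I)) ≤ ∫ u in (0:ℝ)..l, w u := by
    apply intervalIntegral.integral_mono_on hl (hv.div_const _) hw
    intro u hu
    exact div_le_div_of_nonneg_left (h.2.1 u) (hfpos u hu) (hfub u hu)
  have hIS : I / (fa + I) ≤ L := by
    rw [hIdef, ← intervalIntegral.integral_div]
    exact hmono
  have : I ≤ L * (fa + I) := by
    rw [div_le_iff₀ hS] at hIS
    linarith
  have hLnn : 0 ≤ L := le_trans (div_nonneg hInn hS.le) hIS
  nlinarith




/-- Concatenation of countably many admissible paths converging to a limit point. -/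
lemma concat_limit {D : Set M}
    {p : M} (hpD : p ∉ D) (q : ℕ → M)
    (l : ℕ → ℝ) (γp : ℕ → ℝ → M) (vp : ℕ → ℝ → ℝ)
    (hl : ∀ n, 0 ≤ l n) (hγ0 : ∀ n, γp n 0 = q n) (hγl : ∀ n, γp n (l n) = q (n+1))
    (hadm : ∀ n, IsAdmissiblePath D (γp n) (vp n) (l n))
    (hvint : ∀ n, IntervalIntegrable (vp n) volume 0 (l n))
    (hwint : ∀ n, IntervalIntegrable (fun x => vp n x / infDist (γp n x) D) volume 0 (l n))
    {C : ℝ} (hC : 0 < C)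
    (hI : ∀ n, (∫ x in (0:ℝ)..(l n), vp n x) ≤ C * (1/2)^n)
    (hL : ∀ n, rescaledLength D (γp n) (vp n) (l n) ≤ C * (1/2)^n)
    (hq : Tendsto q atTop (nhds p)) :
    ∃ Γ : ℝ → M, ∃ V : ℝ → ℝ, IsAdmissiblePath D Γ V 1 ∧
      (∀ n : ℕ, Γ (1 - (1/2:ℝ)^n) = q n) ∧ Γ 1 = p ∧
      ∀ n : ℕ, (∫ x in (1 - (1/2:ℝ)^n)..1, V x / infDist (Γ x) D) ≤ 2 * C * (1/2)^n := by
  classical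
  set T : ℕ → ℝ := fun n => 1 - (1/2:ℝ)^n with hTdef
  have hT0 : T 0 = 0 := by simp [hTdef]
  have hTlt1 : ∀ n, T n < 1 := by
    intro n
    have : (0:ℝ) < (1/2)^n := by positivity
    simp only [hTdef]; linarith
  have hTnn : ∀ n, 0 ≤ T n := by
    intro n
    have : ((1:ℝ)/2)^n ≤ 1 := pow_le_one₀ (by norm_num) (by norm_num)
    simp only [hTdef]; linarith
  have hTle1 : ∀ n, T n ≤ 1 := fun n => (hTlt1 n).le
  have hTmono : ∀ a b : ℕ, a ≤ b → T a ≤ T b := by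
    intro a b hab
    have : ((1:ℝ)/2)^b ≤ (1/2)^a := pow_le_pow_of_le_one (by norm_num) (by norm_num) hab
    simp only [hTdef]; linarith
  have hTd : ∀ n, T (n+1) - T n = (1/2:ℝ)^(n+1) := by
    intro n
    simp only [hTdef]
    rw [pow_succ]
    ring
  have hTsucc : ∀ n, T n < T (n+1) := by
    intro n
    rw [← sub_pos, hTd]
    positivity
  have hTtop : Tendsto T atTop (nhds 1) := by
    have h1 : Tendsto (fun n : ℕ => ((1:ℝ)/2)^n) atTop (nhds 0) :=
      tendsto_pow_atTop_nhds_zero_of_lt_one (by norm_num) (by norm_num)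
    have h2 := tendsto_const_nhds (x := (1:ℝ)) (f := atTop (α := ℕ))
    simpa [hTdef] using h2.sub h1
  set c : ℕ → ℝ := fun n => l n * 2^(n+1) with hcdef
  have hcnn : ∀ n, 0 ≤ c n := fun n => mul_nonneg (hl n) (by positivity)
  have hcD : ∀ n, c n * (T (n+1) - T n) = l n := by
    intro n
    rw [hTd n]
    simp only [hcdef]
    rw [mul_assoc, ← mul_pow]
    norm_num
  -- the index function
  have hex : ∀ t : ℝ, t < 1 → ∃ n : ℕ, t < T (n+1) := by
    intro t ht
    obtain ⟨n, hn⟩ := exists_pow_lt_of_lt_one (show (0:ℝ) < 1 - t by linarith)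
      (show (1:ℝ)/2 < 1 by norm_num)
    refine ⟨n, ?_⟩
    have h2 : ((1:ℝ)/2)^(n+1) ≤ (1/2)^n := pow_le_pow_of_le_one (by norm_num) (by norm_num) (Nat.le_succ n)
    simp only [hTdef]; linarith
  set idx : ℝ → ℕ := fun t => if h : ∃ n : ℕ, t < T (n+1) then Nat.find h else 0 with hidxdef
  have hidx_spec : ∀ t : ℝ, t < 1 → t < T (idx t + 1) := by
    intro t ht
    have h := hex t ht
    simp only [hidxdef, dif_pos h]
    exact Nat.find_spec h
  have hidx_lb : ∀ t : ℝ, 0 ≤ t → t < 1 → T (idx t) ≤ t := by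
    intro t ht0 ht
    have h := hex t ht
    simp only [hidxdef, dif_pos h]
    rcases Nat.eq_zero_or_pos (Nat.find h) with h0 | h0
    · rw [h0, hT0]; exact ht0
    · obtain ⟨k, hk⟩ := Nat.exists_eq_succ_of_ne_zero h0.ne'
      rw [hk]
      have := Nat.find_min h (m := k) (by omega)
      push_neg at this
      exact this
  have hidx_eq : ∀ t : ℝ, ∀ n : ℕ, T n ≤ t → t < T (n+1) → idx t = n := by
    intro t n h1 h2
    have h : ∃ k : ℕ, t < T (k+1) := ⟨n, h2⟩
    simp only [hidxdef, dif_pos h]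
    have hle : Nat.find h ≤ n := Nat.find_min' h h2
    rcases eq_or_lt_of_le hle with heq | hlt
    · exact heq
    · exfalso
      have := Nat.find_spec h
      have h3 : T (Nat.find h + 1) ≤ T n := hTmono _ _ (by omega)
      linarith
  -- the concatenated path
  set Γ : ℝ → M := fun t => if t < 1 then γp (idx t) (c (idx t) * (t - T (idx t))) else p
    with hΓdef
  set V : ℝ → ℝ := fun t => if 0 ≤ t ∧ t < 1 then
      c (idx t) * vp (idx t) (c (idx t) * (t - T (idx t))) else 0 with hVdef
  have hVnn : ∀ t, 0 ≤ V t := by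
    intro t
    simp only [hVdef]
    split
    · exact mul_nonneg (hcnn _) ((hadm _).2.1 _)
    · exact le_refl 0
  have hphi : ∀ n : ℕ, ∀ t ∈ Icc (T n) (T (n+1)), c n * (t - T n) ∈ Icc 0 (l n) := by
    intro n t ht
    constructor
    · exact mul_nonneg (hcnn n) (by linarith [ht.1])
    · calc c n * (t - T n) ≤ c n * (T (n+1) - T n) :=
          mul_le_mul_of_nonneg_left (by linarith [ht.2]) (hcnn n)
        _ = l n := hcD n
  have hseg : ∀ n : ℕ, ∀ t ∈ Ico (T n) (T (n+1)),
      Γ t = γp n (c n * (t - T n)) ∧ V t = c n * vp n (c n * (t - T n)) := by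
    intro n t ht
    have ht1 : t < 1 := lt_of_lt_of_le ht.2 (hTle1 (n+1))
    have ht0 : 0 ≤ t := le_trans (hTnn n) ht.1
    have hi : idx t = n := hidx_eq t n ht.1 ht.2
    constructor
    · simp only [hΓdef, if_pos ht1, hi]
    · simp only [hVdef, if_pos (And.intro ht0 ht1), hi]
  have hΓT : ∀ n, Γ (T n) = q n := by
    intro n
    have := (hseg n (T n) ⟨le_refl _, hTsucc n⟩).1
    rw [this, sub_self, mul_zero, hγ0]
  have hΓIcc : ∀ n : ℕ, ∀ t ∈ Icc (T n) (T (n+1)), Γ t = γp n (c n * (t - T n)) := by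
    intro n t ht
    rcases lt_or_eq_of_le ht.2 with h | h
    · exact (hseg n t ⟨ht.1, h⟩).1
    · rw [h, hΓT (n+1), ← hγl n, ← hcD n]
  have hΓ1 : Γ 1 = p := by simp only [hΓdef, if_neg (lt_irrefl (1:ℝ))]
  have hΓD : ∀ t ∈ Icc (0:ℝ) 1, Γ t ∉ D := by
    intro t ht
    rcases lt_or_eq_of_le ht.2 with h | h
    · have h1 := hidx_lb t ht.1 h
      have h2 := hidx_spec t h
      rw [(hseg (idx t) t ⟨h1, h2⟩).1]
      exact (hadm (idx t)).1 _ (hphi (idx t) t ⟨h1, h2.le⟩)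
    · rw [h, hΓ1]; exact hpD
  -- model functions and integrability of pieces
  have hcomp : ∀ (g : ℝ → ℝ) (n : ℕ), IntervalIntegrable g volume 0 (l n) →
      IntervalIntegrable (fun t => c n * g (c n * (t - T n))) volume (T n) (T (n+1)) := by
    intro g n hg
    by_cases hc0 : c n = 0
    · have heq : (fun t => c n * g (c n * (t - T n))) = fun _ => (0:ℝ) := by
        funext t; rw [hc0, zero_mul]
      rw [heq]
      exact intervalIntegrable_const
    · have hcpos : 0 < c n := lt_of_le_of_ne (hcnn n) (Ne.symm hc0)
      have h1 := hg.comp_sub_right (c n * T n)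
      have h2 := h1.comp_mul_left (c := c n)
      have e1 : (0 + c n * T n) / c n = T n := by rw [zero_add]; field_simp
      have e2 : (l n + c n * T n) / c n = T (n+1) := by
        rw [div_eq_iff hc0]
        have h3 := hcD n
        ring_nf
        ring_nf at h3
        linarith
      rw [e1, e2] at h2
      have h4 := h2.const_mul (c n)
      have heq : (fun t => c n * g (c n * (t - T n))) = fun t => c n * g (c n * t - c n * T n) := by
        funext t; rw [mul_sub]
      rw [heq]
      exact h4
  have hval : ∀ (g : ℝ → ℝ) (n : ℕ),
      (∫ x in (T n)..(T (n+1)), c n * g (c n * (x - T n))) = ∫ x in (0:ℝ)..(l n), g x := by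
    intro g n
    have heq : (fun t => c n * g (c n * (t - T n))) = fun t => c n * g (c n * t - c n * T n) := by
      funext t; rw [mul_sub]
    rw [heq]
    have h1 := intervalIntegral.smul_integral_comp_mul_sub (a := T n) (b := T (n+1)) g (c n) (c n * T n)
    rw [intervalIntegral.integral_const_mul, ← smul_eq_mul, h1, sub_self, ← mul_sub, hcD n]
  -- W on segments
  have hWseg : ∀ n : ℕ, ∀ t ∈ Ico (T n) (T (n+1)),
      V t / infDist (Γ t) D
        = c n * (vp n (c n * (t - T n)) / infDist (γp n (c n * (t - T n))) D) := by
    intro n t ht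
    rw [(hseg n t ht).1, (hseg n t ht).2, mul_div_assoc]
  -- interval integrability of the pieces of V and W
  have hVpiece : ∀ n : ℕ, IntervalIntegrable V volume (T n) (T (n+1)) := by
    intro n
    rw [intervalIntegrable_iff, uIoc_of_le (hTsucc n).le, integrableOn_Ioc_iff_integrableOn_Ioo]
    have h1 := hcomp (vp n) n (hvint n)
    rw [intervalIntegrable_iff, uIoc_of_le (hTsucc n).le, integrableOn_Ioc_iff_integrableOn_Ioo] at h1
    apply h1.congr_fun _ measurableSet_Ioo
    intro t ht
    exact ((hseg n t ⟨ht.1.le, ht.2⟩).2).symm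
  have hWpiece : ∀ n : ℕ, IntervalIntegrable (fun t => V t / infDist (Γ t) D)
      volume (T n) (T (n+1)) := by
    intro n
    rw [intervalIntegrable_iff, uIoc_of_le (hTsucc n).le, integrableOn_Ioc_iff_integrableOn_Ioo]
    have h1 := hcomp (fun x => vp n x / infDist (γp n x) D) n (hwint n)
    rw [intervalIntegrable_iff, uIoc_of_le (hTsucc n).le, integrableOn_Ioc_iff_integrableOn_Ioo] at h1
    apply h1.congr_fun _ measurableSet_Ioo
    intro t ht
    exact (hWseg n t ⟨ht.1.le, ht.2⟩).symm
  -- values of the pieces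
  have hae : ∀ n : ℕ, ∀ᵐ x : ℝ ∂volume, x ≠ T (n+1) := by
    intro n
    rw [ae_iff]
    have : {x : ℝ | ¬ x ≠ T (n+1)} = {T (n+1)} := by
      ext x; simp
    rw [this]
    exact Real.volume_singleton
  have hVval : ∀ n : ℕ, (∫ x in (T n)..(T (n+1)), V x) = ∫ x in (0:ℝ)..(l n), vp n x := by
    intro n
    rw [← hval (vp n) n]
    apply intervalIntegral.integral_congr_ae
    filter_upwards [hae n] with x hx hmem
    rw [uIoc_of_le (hTsucc n).le] at hmem
    have hxlt : x < T (n+1) := lt_of_le_of_ne hmem.2 hx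
    exact (hseg n x ⟨hmem.1.le, hxlt⟩).2
  have hWval : ∀ n : ℕ, (∫ x in (T n)..(T (n+1)), V x / infDist (Γ x) D)
      = rescaledLength D (γp n) (vp n) (l n) := by
    intro n
    unfold rescaledLength
    rw [← hval (fun x => vp n x / infDist (γp n x) D) n]
    apply intervalIntegral.integral_congr_ae
    filter_upwards [hae n] with x hx hmem
    rw [uIoc_of_le (hTsucc n).le] at hmem
    have hxlt : x < T (n+1) := lt_of_le_of_ne hmem.2 hx
    exact hWseg n x ⟨hmem.1.le, hxlt⟩
  -- integrability on (0,1)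
  have hcover : Ioo (0:ℝ) 1 = ⋃ n : ℕ, Ioc (T n) (T (n+1)) := by
    ext t
    simp only [mem_Ioo, mem_iUnion, mem_Ioc]
    constructor
    · rintro ⟨ht0, ht1⟩
      have h1 := hidx_lb t ht0.le ht1
      have h2 := hidx_spec t ht1
      rcases eq_or_lt_of_le h1 with heq | hlt
      · cases' Nat.eq_zero_or_pos (idx t) with h0 h0
        · exfalso; rw [h0, hT0] at heq; linarith
        · obtain ⟨k, hk⟩ := Nat.exists_eq_succ_of_ne_zero h0.ne'
          refine ⟨k, ?_, ?_⟩
          · rw [hk] at heq; rw [← heq]; exact hTsucc k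
          · rw [hk] at heq; rw [← heq]
      · exact ⟨idx t, hlt, h2.le⟩
    · rintro ⟨n, hn1, hn2⟩
      exact ⟨lt_of_le_of_lt (hTnn n) hn1, lt_of_le_of_lt hn2 (hTlt1 (n+1))⟩
  have hdisj : Pairwise (Function.onFun Disjoint fun n : ℕ => Ioc (T n) (T (n+1))) := by
    intro i j hij
    rcases lt_or_gt_of_ne hij with h | h
    · apply Set.disjoint_left.2
      intro x hxi hxj
      have h1 : T (i+1) ≤ T j := hTmono _ _ h
      have := hxi.2; have := hxj.1
      linarith
    · apply Set.disjoint_left.2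
      intro x hxi hxj
      have h1 : T (j+1) ≤ T i := hTmono _ _ h
      have := hxi.1; have := hxj.2
      linarith
  have hunion : ∀ F : ℝ → ℝ, (∀ t, 0 ≤ F t) →
      (∀ n, IntervalIntegrable F volume (T n) (T (n+1))) →
      (∀ n, (∫ x in (T n)..(T (n+1)), F x) ≤ C * (1/2)^n) →
      IntegrableOn F (Ioo (0:ℝ) 1) volume := by
    intro F hFnn hFint hFval
    have hpiece : ∀ n, IntegrableOn F (Ioc (T n) (T (n+1))) volume := by
      intro n
      have h1 := hFint n
      rwa [intervalIntegrable_iff, uIoc_of_le (hTsucc n).le] at h1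
    rw [hcover]
    constructor
    · exact aestronglyMeasurable_iUnion_iff.2 fun n => (hpiece n).aestronglyMeasurable
    · rw [HasFiniteIntegral]
      have hlint := MeasureTheory.lintegral_iUnion (μ := volume)
        (fun n : ℕ => measurableSet_Ioc) hdisj (fun a => (‖F a‖₊ : ENNReal))
      refine lt_of_eq_of_lt hlint ?_
      have hterm : ∀ n : ℕ, (∫⁻ a in Ioc (T n) (T (n+1)), (‖F a‖₊ : ENNReal) ∂volume)
          ≤ ENNReal.ofReal (C * (1/2)^n) := by
        intro n
        have h1 : (∫⁻ a in Ioc (T n) (T (n+1)), (‖F a‖₊ : ENNReal) ∂volume)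
            = ∫⁻ a in Ioc (T n) (T (n+1)), ENNReal.ofReal (F a) ∂volume := by
          apply lintegral_congr
          intro a
          rw [← Real.enorm_eq_ofReal (hFnn a)]; rfl
        have h2 := MeasureTheory.ofReal_integral_eq_lintegral_ofReal (hpiece n)
          (Filter.Eventually.of_forall hFnn)
        rw [h1, ← h2]
        apply ENNReal.ofReal_le_ofReal
        have h3 : (∫ x in Ioc (T n) (T (n+1)), F x ∂volume)
            = ∫ x in (T n)..(T (n+1)), F x := by
          rw [intervalIntegral.integral_of_le (hTsucc n).le]
        rw [h3]
        exact hFval n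
      calc ∑' n : ℕ, (∫⁻ a in Ioc (T n) (T (n+1)), (‖F a‖₊ : ENNReal) ∂volume)
          ≤ ∑' n : ℕ, ENNReal.ofReal (C * (1/2)^n) := ENNReal.tsum_le_tsum hterm
        _ = ∑' n : ℕ, ENNReal.ofReal C * (ENNReal.ofReal (1/2))^n := by
            congr 1
            funext n
            rw [ENNReal.ofReal_mul hC.le, ENNReal.ofReal_pow (by norm_num)]
        _ = ENNReal.ofReal C * ∑' n : ℕ, (ENNReal.ofReal (1/2))^n := ENNReal.tsum_mul_left
        _ < ⊤ := by
            apply ENNReal.mul_lt_top ENNReal.ofReal_lt_top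
            rw [ENNReal.tsum_geometric]
            apply ENNReal.inv_lt_top.2
            have h4 : ENNReal.ofReal (1/2) < 1 := by
              rw [← ENNReal.ofReal_one]
              exact ENNReal.ofReal_lt_ofReal_iff_of_nonneg (by norm_num) |>.2 (by norm_num)
            exact tsub_pos_of_lt h4
  have hVIoo : IntegrableOn V (Ioo (0:ℝ) 1) volume := by
    apply hunion V hVnn hVpiece
    intro n
    rw [hVval n]
    exact hI n
  have hWnn : ∀ t, 0 ≤ V t / infDist (Γ t) D := fun t =>
    div_nonneg (hVnn t) infDist_nonneg
  have hWIoo : IntegrableOn (fun t => V t / infDist (Γ t) D) (Ioo (0:ℝ) 1) volume := by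
    apply hunion _ hWnn hWpiece
    intro n
    rw [hWval n]
    exact hL n
  -- interval integrability on arbitrary subintervals of [0,1]
  have hVsub : ∀ a b : ℝ, 0 ≤ a → b ≤ 1 → a ≤ b → IntervalIntegrable V volume a b := by
    intro a b ha hb hab
    rw [intervalIntegrable_iff, uIoc_of_le hab, integrableOn_Ioc_iff_integrableOn_Ioo]
    exact hVIoo.mono_set (fun x hx => ⟨lt_of_le_of_lt ha hx.1, lt_of_lt_of_le hx.2 hb⟩)
  have hWsub : ∀ a b : ℝ, 0 ≤ a → b ≤ 1 → a ≤ b →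
      IntervalIntegrable (fun t => V t / infDist (Γ t) D) volume a b := by
    intro a b ha hb hab
    rw [intervalIntegrable_iff, uIoc_of_le hab, integrableOn_Ioc_iff_integrableOn_Ioo]
    exact hWIoo.mono_set (fun x hx => ⟨lt_of_le_of_lt ha hx.1, lt_of_lt_of_le hx.2 hb⟩)
  -- single-segment distance bound
  have hone : ∀ n : ℕ, ∀ s ∈ Icc (T n) (T (n+1)), ∀ t ∈ Icc (T n) (T (n+1)), s ≤ t →
      dist (Γ s) (Γ t) ≤ ∫ x in s..t, V x := by
    intro n s hs t ht hst
    rw [hΓIcc n s hs, hΓIcc n t ht]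
    have h1 := (hadm n).2.2 (c n * (s - T n)) (c n * (t - T n)) (hphi n s hs) (hphi n t ht)
      (mul_le_mul_of_nonneg_left (by linarith) (hcnn n))
    apply le_trans h1
    have h2 : (∫ x in (c n * (s - T n))..(c n * (t - T n)), vp n x)
        = ∫ x in s..t, c n * vp n (c n * (x - T n)) := by
      have heq : (fun x => c n * vp n (c n * (x - T n)))
          = fun x => c n * vp n (c n * x - c n * T n) := by
        funext x; rw [mul_sub]
      have h5 := intervalIntegral.smul_integral_comp_mul_sub (a := s) (b := t)
        (vp n) (c n) (c n * T n)
      rw [show c n * s - c n * T n = c n * (s - T n) by ring,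
        show c n * t - c n * T n = c n * (t - T n) by ring] at h5
      rw [heq, intervalIntegral.integral_const_mul, ← h5, smul_eq_mul]
    rw [h2]
    apply le_of_eq
    apply intervalIntegral.integral_congr_ae
    filter_upwards [hae n] with x hx hmem
    rw [uIoc_of_le hst] at hmem
    have hx1 : T n ≤ x := le_trans hs.1 hmem.1.le
    have hx2 : x < T (n+1) := lt_of_le_of_ne (le_trans hmem.2 ht.2) hx
    exact ((hseg n x ⟨hx1, hx2⟩).2).symm
  -- multi-segment bound
  have hmulti : ∀ k : ℕ, ∀ n : ℕ, ∀ s ∈ Icc (T n) (T (n+1)),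
      ∀ t ∈ Icc (T (n+k)) (T (n+k+1)), s ≤ t → dist (Γ s) (Γ t) ≤ ∫ x in s..t, V x := by
    intro k
    induction k with
    | zero => intro n s hs t ht hst; exact hone n s hs t ht hst
    | succ k ih =>
        intro n s hs t ht hst
        have hmid : T (n+k+1) ≤ t := ht.1
        have hsmid : s ≤ T (n+k+1) := le_trans hs.2 (hTmono _ _ (by omega))
        have h1 : dist (Γ s) (Γ (T (n+k+1))) ≤ ∫ x in s..(T (n+k+1)), V x :=
          ih n s hs (T (n+k+1)) ⟨(hTsucc (n+k)).le, le_refl _⟩ hsmid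
        have h2 : dist (Γ (T (n+k+1))) (Γ t) ≤ ∫ x in (T (n+k+1))..t, V x :=
          hone (n+k+1) (T (n+k+1)) ⟨le_refl _, (hTsucc _).le⟩ t ht hmid
        calc dist (Γ s) (Γ t) ≤ dist (Γ s) (Γ (T (n+k+1))) + dist (Γ (T (n+k+1))) (Γ t) :=
              dist_triangle _ _ _
          _ ≤ (∫ x in s..(T (n+k+1)), V x) + ∫ x in (T (n+k+1))..t, V x := add_le_add h1 h2
          _ = ∫ x in s..t, V x := intervalIntegral.integral_add_adjacent_intervals
              (hVsub s (T (n+k+1)) (le_trans (hTnn n) hs.1) (hTle1 _) hsmid)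
              (hVsub _ t (hTnn _) (le_trans ht.2 (hTle1 _)) hmid)
  -- bound for interior points
  have hgen : ∀ s t : ℝ, 0 ≤ s → s ≤ t → t < 1 → dist (Γ s) (Γ t) ≤ ∫ x in s..t, V x := by
    intro s t hs0 hst ht1
    have hs1 : s < 1 := lt_of_le_of_lt hst ht1
    have hsn : T (idx s) ≤ s := hidx_lb s hs0 hs1
    have hsn2 : s < T (idx s + 1) := hidx_spec s hs1
    have htm : T (idx t) ≤ t := hidx_lb t (le_trans hs0 hst) ht1
    have htm2 : t < T (idx t + 1) := hidx_spec t ht1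
    have hnm : idx s ≤ idx t := by
      by_contra hcon
      push_neg at hcon
      have h3 : T (idx t + 1) ≤ T (idx s) := hTmono _ _ hcon
      linarith
    obtain ⟨k, hk⟩ := Nat.exists_eq_add_of_le hnm
    apply hmulti k (idx s) s ⟨hsn, hsn2.le⟩ t _ hst
    rw [← hk]
    exact ⟨htm, htm2.le⟩
  -- bound up to the endpoint
  have hend : ∀ s : ℝ, 0 ≤ s → s < 1 → dist (Γ s) (Γ 1) ≤ ∫ x in s..1, V x := by
    intro s hs0 hs1
    rw [hΓ1]
    have hkey : ∀ mm : ℕ, s ≤ T mm →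
        dist (Γ s) p ≤ (∫ x in s..1, V x) + dist (q mm) p := by
      intro mm hm
      have h1 : dist (Γ s) (Γ (T mm)) ≤ ∫ x in s..(T mm), V x := by
        rcases eq_or_lt_of_le hm with heq | hlt
        · rw [heq]; simp
        · exact hgen s (T mm) hs0 hm (hTlt1 mm)
      have h2 : (∫ x in s..(T mm), V x) ≤ ∫ x in s..1, V x := by
        have hadd := intervalIntegral.integral_add_adjacent_intervals
          (hVsub s (T mm) hs0 (hTle1 mm) hm) (hVsub (T mm) 1 (hTnn mm) le_rfl (hTle1 mm))
        have hnn : 0 ≤ ∫ x in (T mm)..1, V x :=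
          intervalIntegral.integral_nonneg (hTle1 mm) (fun x _ => hVnn x)
        linarith
      calc dist (Γ s) p ≤ dist (Γ s) (Γ (T mm)) + dist (Γ (T mm)) p := dist_triangle _ _ _
        _ ≤ (∫ x in s..1, V x) + dist (Γ (T mm)) p := add_le_add (le_trans h1 h2) le_rfl
        _ = (∫ x in s..1, V x) + dist (q mm) p := by rw [hΓT mm]
    have hev : ∀ᶠ mm : ℕ in atTop, s ≤ T mm := hTtop.eventually (eventually_ge_nhds hs1)
    have hdq : Tendsto (fun mm => (∫ x in s..1, V x) + dist (q mm) p) atTop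
        (nhds ((∫ x in s..1, V x) + 0)) :=
      tendsto_const_nhds.add (tendsto_iff_dist_tendsto_zero.1 hq)
    rw [add_zero] at hdq
    apply ge_of_tendsto hdq
    filter_upwards [hev] with mm hm
    exact hkey mm hm
  -- admissibility
  have hΓadm : IsAdmissiblePath D Γ V 1 := by
    refine ⟨hΓD, hVnn, ?_⟩
    intro s t hs ht hst
    rcases eq_or_lt_of_le ht.2 with h1 | h1
    · rcases eq_or_lt_of_le hst with h2 | h2
      · rw [h2]; simp
      · subst h1
        exact hend s hs.1 h2
    · exact hgen s t hs.1 hst h1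
  -- tail estimate
  have htail : ∀ n : ℕ, (∫ x in (T n)..1, V x / infDist (Γ x) D) ≤ 2 * C * (1/2)^n := by
    intro n
    set W : ℝ → ℝ := fun x => V x / infDist (Γ x) D with hWdef
    have hpart : ∀ r : ℕ, (∫ x in (T n)..(T (n+r)), W x) ≤ 2 * C * (1/2)^n := by
      intro r
      have hadj := intervalIntegral.sum_integral_adjacent_intervals
        (a := fun k => T (n+k)) (f := W) (μ := volume) (n := r)
        (fun k _ => hWpiece (n+k))
      calc (∫ x in (T n)..(T (n+r)), W x)
          = ∑ k ∈ Finset.range r, ∫ x in (T (n+k))..(T (n+k+1)), W x := hadj.symm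
        _ ≤ ∑ k ∈ Finset.range r, C * (1/2)^(n+k) := by
            apply Finset.sum_le_sum
            intro k _
            rw [hWval (n+k)]
            exact hL (n+k)
        _ = C * (1/2)^n * ∑ k ∈ Finset.range r, ((1:ℝ)/2)^k := by
            rw [Finset.mul_sum]
            apply Finset.sum_congr rfl
            intro k _
            rw [pow_add]; ring
        _ ≤ C * (1/2)^n * 2 := by
            have h3 := sum_geometric_two_le r
            have h4 : (0:ℝ) ≤ C * (1/2)^n := by positivity
            nlinarith
        _ = 2 * C * (1/2)^n := by ring
    have hWIcc : IntegrableOn W (uIcc (T n) 1) volume := by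
      rw [uIcc_of_le (hTle1 n), integrableOn_Icc_iff_integrableOn_Ioo]
      exact hWIoo.mono_set (fun x hx => ⟨lt_of_le_of_lt (hTnn n) hx.1, hx.2⟩)
    have hFc := intervalIntegral.continuousOn_primitive_interval (a := T n) (b := 1) hWIcc
    have h1mem : (1:ℝ) ∈ uIcc (T n) 1 := by
      rw [uIcc_of_le (hTle1 n)]; exact ⟨hTle1 n, le_rfl⟩
    have hcw := hFc 1 h1mem
    have htendT : Tendsto (fun r : ℕ => T (n + r)) atTop (nhds 1) := by
      have h0 : Tendsto (fun r : ℕ => r + n) atTop atTop := tendsto_add_atTop_nat n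
      have h1 := hTtop.comp h0
      have heq : (fun r : ℕ => T (n + r)) = fun r : ℕ => T (r + n) := by
        funext r; rw [Nat.add_comm]
      rw [heq]
      exact h1
    have hmem' : ∀ r : ℕ, T (n + r) ∈ uIcc (T n) 1 := by
      intro r
      rw [uIcc_of_le (hTle1 n)]
      exact ⟨hTmono n (n+r) (Nat.le_add_right n r), hTle1 (n+r)⟩
    have htend2 : Tendsto (fun r : ℕ => ∫ x in (T n)..(T (n+r)), W x) atTop
        (nhds (∫ x in (T n)..1, W x)) := by
      apply hcw.tendsto.comp
      apply tendsto_nhdsWithin_iff.2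
      exact ⟨htendT, Filter.Eventually.of_forall hmem'⟩
    exact le_of_tendsto htend2 (Filter.Eventually.of_forall hpart)
  exact ⟨Γ, V, hΓadm, fun n => hΓT n, hΓ1, htail⟩

end RescaledAux

open RescaledAux

/-- Let `M` be a compact metric space (induced by a Riemannian metric),
`D ⊆ M` closed and nonempty, and let `N` be `M − D` equipped with the metric `g_b`
obtained by rescaling lengths of paths by `1/d(·, D)` (the distance on `N` is the
infimum of rescaled path lengths).  Then `N` is a complete metric space. -/
theorem rescaled_metric_complete {M : Type*} [MetricSpace M] [CompactSpace M]
    (D : Set M) (hD : D.Nonempty) (hDcl : IsClosed D)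
    (N : Type*) [MetricSpace N] (ι : N → M)
    (hinj : Function.Injective ι) (hrange : Set.range ι = Dᶜ)
    (hub : ∀ x y : N, ∀ ε > (0 : ℝ), ∃ l : ℝ, 0 ≤ l ∧
      ∃ (γ : ℝ → M) (v : ℝ → ℝ), γ 0 = ι x ∧ γ l = ι y ∧
        IsAdmissiblePath D γ v l ∧ rescaledLength D γ v l ≤ dist x y + ε)
    (hlb : ∀ x y : N, ∀ l : ℝ, 0 ≤ l → ∀ (γ : ℝ → M) (v : ℝ → ℝ),
      γ 0 = ι x → γ l = ι y → IsAdmissiblePath D γ v l →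
        dist x y ≤ rescaledLength D γ v l) :
    CompleteSpace N := by
  classical
  obtain ⟨d0, hd0⟩ := hD
  set C : ℝ := diam (univ : Set M) + 1 with hCdef
  have hC : 0 < C := by
    have := diam_nonneg (s := (univ : Set M)); positivity
  have hC1 : 1 ≤ C := by
    have := diam_nonneg (s := (univ : Set M)); linarith
  have hfC : ∀ z : M, infDist z D ≤ C := by
    intro z
    calc infDist z D ≤ dist z d0 := infDist_le_dist_of_mem hd0
      _ ≤ diam (univ : Set M) :=
          dist_le_diam_of_mem isCompact_univ.isBounded (mem_univ _) (mem_univ _)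
      _ ≤ C := by rw [hCdef]; linarith
  have hfpos : ∀ x : N, 0 < infDist (ι x) D := by
    intro x
    have hx : ι x ∈ Dᶜ := by rw [← hrange]; exact mem_range_self x
    exact (hDcl.notMem_iff_infDist_pos ⟨d0, hd0⟩).1 hx
  -- good paths
  have goodPath : ∀ x y : N, ∀ ε > (0:ℝ), ∃ l : ℝ, ∃ γ : ℝ → M, ∃ v : ℝ → ℝ,
      0 ≤ l ∧ γ 0 = ι x ∧ γ l = ι y ∧ IsAdmissiblePath D γ v l ∧
      IntervalIntegrable v volume 0 l ∧
      IntervalIntegrable (fun u => v u / infDist (γ u) D) volume 0 l ∧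
      rescaledLength D γ v l ≤ dist x y + ε := by
    intro x y ε hε
    obtain ⟨l, hl, γ, v, hγ0, hγl, hadm, hlen⟩ := hub x y ε hε
    by_cases hw : IntervalIntegrable (fun u => v u / infDist (γ u) D) volume 0 l
    · exact ⟨l, γ, v, hl, hγ0, hγl, hadm,
        v_integrable hDcl ⟨d0, hd0⟩ hl hadm hC hfC hw, hw, hlen⟩
    · have h0 : rescaledLength D γ v l = 0 := intervalIntegral.integral_undef hw
      have hxy : dist x y ≤ 0 := by
        have := hlb x y l hl γ v hγ0 hγl hadm
        rw [h0] at this; exact this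
      have hxy' : x = y := by
        have := dist_nonneg (x := x) (y := y)
        exact dist_le_zero.1 hxy
      subst hxy'
      refine ⟨0, fun _ => ι x, fun _ => 0, le_refl _, rfl, rfl, ?_, ?_, ?_, ?_⟩
      · refine ⟨fun t _ => ?_, fun t => le_refl _, fun s t _ _ hst => ?_⟩
        · have hx : ι x ∈ Dᶜ := by rw [← hrange]; exact mem_range_self x
          exact hx
        · simp
      · simp [_root_.intervalIntegrable_const]
      · simp [_root_.intervalIntegrable_const]
      · unfold rescaledLength
        simp only [intervalIntegral.integral_same]
        positivity
  -- main argument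
  apply Metric.complete_of_convergent_controlled_sequences
      (fun n => (1/16 : ℝ) * (1/2)^n) (fun n => by positivity)
  intro u hu
  set B : ℕ → ℝ := fun n => (1/16 : ℝ) * (1/2)^n with hBdef
  have hBpos : ∀ n, 0 < B n := fun n => by positivity
  have hBle : ∀ n, B n ≤ 1/16 := by
    intro n
    have h1 : ((1:ℝ)/2)^n ≤ 1 := pow_le_one₀ (by norm_num) (by norm_num)
    calc B n = (1/16) * (1/2)^n := rfl
      _ ≤ (1/16) * 1 := by nlinarith
      _ = 1/16 := by norm_num
  choose l γp vp hl hγ0 hγl hadm hvint hwint hlen using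
    fun n => goodPath (u n) (u (n+1)) (B n) (hBpos n)
  set fn : ℕ → ℝ := fun n => infDist (ι (u n)) D with hfndef
  set L : ℕ → ℝ := fun n => rescaledLength D (γp n) (vp n) (l n) with hLdef
  set I : ℕ → ℝ := fun n => ∫ x in (0:ℝ)..(l n), vp n x with hIdef
  have hfn0 : ∀ n, 0 < fn n := fun n => hfpos (u n)
  have hfnC : ∀ n, fn n ≤ C := fun n => hfC _
  have hLnn : ∀ n, 0 ≤ L n := fun n =>
    intervalIntegral.integral_nonneg (hl n)
      (fun x _ => div_nonneg ((hadm n).2.1 x) infDist_nonneg)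
  have hdistu : ∀ n, dist (u n) (u (n+1)) < B n := fun n => hu n n (n+1) le_rfl (Nat.le_succ n)
  have hLB : ∀ n, L n < 2 * B n := by
    intro n
    calc L n ≤ dist (u n) (u (n+1)) + B n := hlen n
      _ < 2 * B n := by linarith [hdistu n]
  have hLhalf : ∀ n, L n ≤ 1/2 := by
    intro n
    have := hLB n; have := hBle n; linarith
  have hI2 : ∀ n, I n ≤ 2 * L n * fn n := by
    intro n
    have := path_estimates hDcl ⟨d0, hd0⟩ (hl n) (hadm n) (hvint n) (hwint n) (hLhalf n)
    rw [hγ0 n] at this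
    exact this
  have hInn : ∀ n, 0 ≤ I n := fun n =>
    intervalIntegral.integral_nonneg (hl n) (fun x _ => (hadm n).2.1 x)
  have hIB : ∀ n, I n ≤ 4 * B n * fn n := by
    intro n
    have h1 := hI2 n; have h2 := hLB n; have h3 := (hfn0 n).le
    nlinarith [hLnn n]
  have hIC : ∀ n, I n ≤ 4 * B n * C := by
    intro n
    have := hIB n
    nlinarith [hBpos n, hfnC n, hfn0 n]
  have hdistM : ∀ n, dist (ι (u n)) (ι (u (n+1))) ≤ I n := by
    intro n
    have := (hadm n).2.2 0 (l n) (left_mem_Icc.2 (hl n)) (right_mem_Icc.2 (hl n)) (hl n)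
    rw [hγ0 n, hγl n] at this
    exact this
  have hfsucc : ∀ n, fn n - I n ≤ fn (n+1) := by
    intro n
    have h1 : fn n ≤ fn (n+1) + dist (ι (u n)) (ι (u (n+1))) := by
      exact infDist_le_infDist_add_dist (x := ι (u n)) (y := ι (u (n+1))) (s := D)
    linarith [hdistM n]
  have key : ∀ n, fn n * Real.exp (-(8 * B n)) ≤ fn (n+1) := by
    intro n
    have hBhalf : 4 * B n ≤ 1/2 := by linarith [hBle n]
    have hexp : Real.exp (-(2*(4 * B n))) ≤ 1 - 4 * B n :=
      exp_neg_le (by linarith [(hBpos n).le]) hBhalf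
    have h8 : Real.exp (-(8 * B n)) = Real.exp (-(2*(4*B n))) := by ring_nf
    calc fn n * Real.exp (-(8 * B n)) ≤ fn n * (1 - 4 * B n) := by
          rw [h8]
          exact mul_le_mul_of_nonneg_left hexp (hfn0 n).le
      _ ≤ fn n - I n := by nlinarith [hIB n]
      _ ≤ fn (n+1) := hfsucc n
  have hfnlb : ∀ n, fn 0 * Real.exp (-(8 * ∑ k ∈ Finset.range n, B k)) ≤ fn n := by
    intro n
    induction n with
    | zero => simp
    | succ n ih =>
        have hsum : (8 : ℝ) * ∑ k ∈ Finset.range (n+1), B k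
            = 8 * ∑ k ∈ Finset.range n, B k + 8 * B n := by
          rw [Finset.sum_range_succ]; ring
        calc fn 0 * Real.exp (-(8 * ∑ k ∈ Finset.range (n+1), B k))
            = fn 0 * Real.exp (-(8 * ∑ k ∈ Finset.range n, B k)) * Real.exp (-(8 * B n)) := by
              rw [hsum, neg_add, Real.exp_add]; ring
          _ ≤ fn n * Real.exp (-(8 * B n)) :=
              mul_le_mul_of_nonneg_right ih (Real.exp_nonneg _)
          _ ≤ fn (n+1) := key n
  set m : ℝ := fn 0 * Real.exp (-1) with hmdef
  have hm : 0 < m := mul_pos (hfn0 0) (Real.exp_pos _)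
  have hfnm : ∀ n, m ≤ fn n := by
    intro n
    have hsum : ∑ k ∈ Finset.range n, B k ≤ 1/8 := by
      have h1 : ∑ k ∈ Finset.range n, B k = (1/16) * ∑ k ∈ Finset.range n, ((1:ℝ)/2)^k := by
        rw [Finset.mul_sum]
      rw [h1]
      have := sum_geometric_two_le n
      nlinarith
    have hexp : Real.exp (-1) ≤ Real.exp (-(8 * ∑ k ∈ Finset.range n, B k)) := by
      apply Real.exp_le_exp.2
      linarith
    calc m = fn 0 * Real.exp (-1) := rfl
      _ ≤ fn 0 * Real.exp (-(8 * ∑ k ∈ Finset.range n, B k)) :=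
          mul_le_mul_of_nonneg_left hexp (hfn0 0).le
      _ ≤ fn n := hfnlb n
  -- the image sequence is Cauchy in M
  have hcM : CauchySeq (fun n => ι (u n)) := by
    apply cauchySeq_of_le_geometric (1/2 : ℝ) (C/4) (by norm_num)
    intro n
    calc dist (ι (u n)) (ι (u (n+1))) ≤ I n := hdistM n
      _ ≤ 4 * B n * C := hIC n
      _ = C/4 * (1/2)^n := by rw [hBdef]; ring
  obtain ⟨p, hp⟩ := cauchySeq_tendsto_of_complete hcM
  have hfp : m ≤ infDist p D := by
    have h1 : Tendsto (fun n => fn n) atTop (nhds (infDist p D)) :=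
      ((continuous_infDist_pt D).tendsto p).comp hp
    exact ge_of_tendsto h1 (Filter.Eventually.of_forall hfnm)
  have hpD : p ∉ D := by
    intro hmem
    rw [infDist_zero_of_mem hmem] at hfp
    linarith
  obtain ⟨y, hy⟩ : p ∈ Set.range ι := by rw [hrange]; exact hpD
  -- bounds needed for the concatenation lemma
  have hIbound : ∀ n, (∫ x in (0:ℝ)..(l n), vp n x) ≤ C * (1/2)^n := by
    intro n
    have hpow : (0:ℝ) ≤ (1/2)^n := by positivity
    calc (∫ x in (0:ℝ)..(l n), vp n x) ≤ 4 * B n * C := hIC n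
      _ = C/4 * (1/2)^n := by rw [hBdef]; ring
      _ ≤ C * (1/2)^n := by nlinarith
  have hLbound : ∀ n, rescaledLength D (γp n) (vp n) (l n) ≤ C * (1/2)^n := by
    intro n
    have hpow : (0:ℝ) ≤ (1/2)^n := by positivity
    have h1 : rescaledLength D (γp n) (vp n) (l n) ≤ 2 * B n := (hLB n).le
    calc rescaledLength D (γp n) (vp n) (l n) ≤ 2 * B n := h1
      _ = (1/8) * (1/2)^n := by rw [hBdef]; ring
      _ ≤ C * (1/2)^n := by nlinarith
  obtain ⟨Γ, V, hΓadm, hΓT, hΓ1, htail⟩ := concat_limit hpD (fun n => ι (u n)) l γp vp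
    hl hγ0 hγl hadm hvint hwint hC hIbound hLbound hp
  refine ⟨y, ?_⟩
  have hTnn : ∀ n : ℕ, (0:ℝ) ≤ 1 - (1/2)^n := by
    intro n
    have : ((1:ℝ)/2)^n ≤ 1 := pow_le_one₀ (by norm_num) (by norm_num)
    linarith
  have hTle1 : ∀ n : ℕ, (1:ℝ) - (1/2)^n ≤ 1 := by
    intro n
    have : (0:ℝ) ≤ (1/2)^n := by positivity
    linarith
  have htail' : ∀ n : ℕ, dist (u n) y ≤ 2 * C * (1/2)^n := by
    intro n
    have hsh := shift_admissible hΓadm (hTnn n) le_rfl (hTle1 n)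
    have h0 : (fun x => Γ (x + (1 - (1/2:ℝ)^n))) 0 = ι (u n) := by
      show Γ (0 + (1 - (1/2:ℝ)^n)) = ι (u n)
      rw [zero_add, hΓT n]
    have h1 : (fun x => Γ (x + (1 - (1/2:ℝ)^n))) (1 - (1 - (1/2:ℝ)^n)) = ι y := by
      show Γ ((1 - (1 - (1/2:ℝ)^n)) + (1 - (1/2:ℝ)^n)) = ι y
      rw [show (1 - (1 - (1/2:ℝ)^n)) + (1 - (1/2:ℝ)^n) = 1 by ring, hΓ1, hy]
    have h2 := hlb (u n) y (1 - (1 - (1/2:ℝ)^n))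
      (by linarith [hTle1 n]) _ _ h0 h1 hsh
    rw [shift_length Γ V (1 - (1/2:ℝ)^n) 1] at h2
    exact le_trans h2 (htail n)
  rw [tendsto_iff_dist_tendsto_zero]
  have hgeo : Tendsto (fun n : ℕ => 2 * C * ((1:ℝ)/2)^n) atTop (nhds 0) := by
    have h1 := tendsto_pow_atTop_nhds_zero_of_lt_one
      (by norm_num : (0:ℝ) ≤ 1/2) (by norm_num : (1:ℝ)/2 < 1)
    simpa using h1.const_mul (2*C)
  exact squeeze_zero (fun n => dist_nonneg) htail' hgeo
end

section
/- Let N be a complete, locally compact length metric space with proper metric (closed balls compact), and let p : Ñ → N be a covering map with Ñ path-connected, equipped with the lifted length metric. Then every closed ball in Ñ is compact. -/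
open ENNReal

/-!
The lifted metric is a length metric, and `p` is `1`-Lipschitz for it. Over the compact ball
`closedBall (p x) r` the cover by evenly covered open sets has a Lebesgue number `2 * ε`; an
`ε`-ball of `N'` over it is then the image of a compact ball of `N` under a continuous local
section, because a short path starting at its centre projects into a trivializing set and is
therefore the lift of its projection. In a length space, compactness of all `ε`-balls centred in
a compact ball of radius `ρ` makes the ball of radius `ρ + ε / 2` compact (it lies in finitely
many of them), so the balls about `x` grow compactly up to radius `r`.
-/

open Set Metric

def HasApproxIntermediatePoints (X : Type*) [PseudoMetricSpace X] : Prop :=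
  ∀ x w : X, ∀ ρ ∈ Icc 0 (dist x w), ∀ η > 0,
    ∃ y, dist x y ≤ ρ ∧ dist y w ≤ dist x w - ρ + η

namespace HasApproxIntermediatePoints

variable {X : Type*} [PseudoMetricSpace X]

lemma exists_mem_closedBall_dist_le (hX : HasApproxIntermediatePoints X) {x w : X}
    {ρ s η : ℝ} (hρ : 0 ≤ ρ) (hs : 0 ≤ s) (hw : w ∈ closedBall x (ρ + s))
    (hη : 0 < η) :
    ∃ y ∈ closedBall x ρ, dist y w ≤ s + η := by
  rw [mem_closedBall, dist_comm] at hw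
  rcases le_or_gt (dist x w) ρ with h | h
  · exact ⟨w, by rwa [mem_closedBall, dist_comm], by rw [dist_self]; positivity⟩
  · obtain ⟨y, hxy, hyw⟩ := hX x w ρ ⟨hρ, h.le⟩ η hη
    exact ⟨y, by rwa [mem_closedBall, dist_comm], by linarith⟩

lemma isCompact_closedBall_add (hX : HasApproxIntermediatePoints X) {x : X} {ρ ε : ℝ}
    (hρ : 0 ≤ ρ) (hε : 0 < ε) (hC : IsCompact (closedBall x ρ))
    (hloc : ∀ y ∈ closedBall x ρ, IsCompact (closedBall y ε)) :
    IsCompact (closedBall x (ρ + ε / 2)) := by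
  obtain ⟨t, htC, htfin, hcover⟩ := hC.finite_cover_balls (e := ε / 4) (by positivity)
  refine (htfin.isCompact_biUnion fun z hz => hloc z (htC hz)).of_isClosed_subset
    isClosed_closedBall fun w hw => ?_
  obtain ⟨y, hy, hyw⟩ :=
    hX.exists_mem_closedBall_dist_le hρ (by positivity) hw (η := ε / 4) (by positivity)
  obtain ⟨z, hz, hyz⟩ := mem_iUnion₂.mp (hcover hy)
  refine mem_iUnion₂.mpr ⟨z, hz, ?_⟩
  rw [mem_ball] at hyz
  rw [mem_closedBall]
  linarith [dist_triangle w y z, dist_comm w y]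

theorem isCompact_closedBall (hX : HasApproxIntermediatePoints X) {x : X} {r ε : ℝ}
    (hε : 0 < ε) (hloc : ∀ y ∈ closedBall x r, IsCompact (closedBall y ε)) :
    IsCompact (closedBall x r) := by
  rcases lt_or_ge r 0 with hr | hr
  · simp [closedBall_eq_empty.mpr hr]
  have hball : ∀ n : ℕ, IsCompact (closedBall x (min r (n * (ε / 2)))) := by
    intro n
    induction n with
    | zero =>
      refine (hloc x (mem_closedBall_self hr)).of_isClosed_subset isClosed_closedBall
        (closedBall_subset_closedBall ?_)
      simp [hr, hε.le]
    | succ n ih =>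
      have hρ : 0 ≤ min r (n * (ε / 2)) := le_min hr (by positivity)
      refine (hX.isCompact_closedBall_add hρ hε ih fun y hy =>
        hloc y (closedBall_subset_closedBall (min_le_left _ _) hy)).of_isClosed_subset
        isClosed_closedBall (closedBall_subset_closedBall ?_)
      rw [← min_add_add_right]
      push_cast
      exact min_le_min (by linarith) (by linarith)
  obtain ⟨n, hn⟩ := exists_nat_ge (r / (ε / 2))
  simpa [min_eq_left ((div_le_iff₀ (by positivity)).mp hn)] using hball n

end HasApproxIntermediatePoints

lemma Path.exists_eVariationOn_comp_eq_Icc {X E : Type*} [TopologicalSpace X]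
    [PseudoEMetricSpace E] (f : X → E) {a b : X} (γ : Path a b) {s t : unitInterval}
    (hst : s ≤ t) :
    ∃ δ : Path (γ s) (γ t),
      eVariationOn (f ∘ δ) univ = eVariationOn (f ∘ γ) (Icc s t) := by
  let φ : unitInterval → unitInterval := (↑) ∘ projIcc s t hst
  refine ⟨⟨⟨γ ∘ φ, by fun_prop⟩, ?_, ?_⟩, ?_⟩
  · simp [φ, projIcc_of_le_left hst unitInterval.nonneg']
  · simp [φ, projIcc_of_right_le hst unitInterval.le_one']
  · change eVariationOn ((f ∘ γ) ∘ φ) univ = _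
    have hφ : Monotone φ := (Subtype.mono_coe _).comp (monotone_projIcc hst)
    rw [eVariationOn.comp_eq_of_monotoneOn _ _ (hφ.monotoneOn univ), image_univ, range_comp,
      range_projIcc, image_univ, Subtype.range_coe]

def IsLiftedLengthMetric {N N' : Type*} [PseudoEMetricSpace N] [PseudoMetricSpace N']
    (p : N' → N) : Prop :=
  ∀ x y : N', ENNReal.ofReal (dist x y) = ⨅ γ : Path x y, eVariationOn (p ∘ ⇑γ) univ

namespace IsLiftedLengthMetric

variable {N N' : Type*} [PseudoMetricSpace N] [PseudoMetricSpace N'] {p : N' → N}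

lemma lipschitzWith (hl : IsLiftedLengthMetric p) : LipschitzWith 1 p :=
  LipschitzWith.of_edist_le fun a b => by
    rw [edist_dist a b, hl]
    exact le_iInf fun γ => by
      simpa using eVariationOn.edist_le (p ∘ γ) (mem_univ 0) (mem_univ 1)

lemma ofReal_dist_le (hl : IsLiftedLengthMetric p) {a b : N'} (γ : Path a b) :
    ENNReal.ofReal (dist a b) ≤ eVariationOn (p ∘ γ) univ :=
  hl a b ▸ iInf_le _ γ

lemma exists_path_eVariationOn_lt (hl : IsLiftedLengthMetric p) {a b : N'} {c : ℝ}
    (h : dist a b < c) : ∃ γ : Path a b, eVariationOn (p ∘ γ) univ < ENNReal.ofReal c := by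
  rw [← iInf_lt_iff, ← hl]
  exact (ofReal_lt_ofReal_iff (dist_nonneg.trans_lt h)).mpr h

lemma hasApproxIntermediatePoints (hl : IsLiftedLengthMetric p) :
    HasApproxIntermediatePoints N' := by
  intro x w ρ hρ η hη
  obtain ⟨γ, hγ⟩ := hl.exists_path_eVariationOn_lt (lt_add_of_pos_right (dist x w) hη)
  obtain ⟨t, ht⟩ : ∃ t, dist x (γ t) = ρ :=
    intermediate_value_univ 0 1 (continuous_const.dist γ.continuous) (by simpa using hρ)
  obtain ⟨δ₁, hδ₁⟩ := γ.exists_eVariationOn_comp_eq_Icc p (unitInterval.nonneg' (t := t))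
  obtain ⟨δ₂, hδ₂⟩ := γ.exists_eVariationOn_comp_eq_Icc p unitInterval.le_one'
  have hIcc : Icc (0 : unitInterval) 1 = univ :=
    eq_univ_of_forall fun s => ⟨unitInterval.nonneg', unitInterval.le_one'⟩
  have hsplit : ENNReal.ofReal (dist x (γ t)) + ENNReal.ofReal (dist (γ t) w)
      ≤ eVariationOn (p ∘ γ) univ :=
    calc _ ≤ eVariationOn (p ∘ δ₁) univ + eVariationOn (p ∘ δ₂) univ := by
          gcongr
          · simpa using hl.ofReal_dist_le δ₁
          · simpa using hl.ofReal_dist_le δ₂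
      _ = eVariationOn (p ∘ γ) (Icc 0 t) + eVariationOn (p ∘ γ) (Icc t 1) := by
          rw [hδ₁, hδ₂]
      _ = eVariationOn (p ∘ γ) univ := by
          simpa [hIcc] using eVariationOn.Icc_add_Icc (p ∘ γ) (s := univ)
            unitInterval.nonneg' unitInterval.le_one' (mem_univ t)
  have hlt := hsplit.trans_lt hγ
  rw [← ofReal_add dist_nonneg dist_nonneg, ofReal_lt_ofReal_iff (by positivity)] at hlt
  exact ⟨γ t, ht.le, by linarith⟩

lemma isCompact_closedBall_of_ball_subset_baseSet [ProperSpace N]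
    (hl : IsLiftedLengthMetric p) (hp : IsCoveringMap p) {F : Type*} [TopologicalSpace F]
    (e : Bundle.Trivialization F p) {y : N'} {ε : ℝ} (hε : 0 < ε)
    (hsub : ball (p y) (2 * ε) ⊆ e.baseSet) : IsCompact (closedBall y ε) := by
  let s : N → N' := fun z => e.toOpenPartialHomeomorph.symm (z, (e y).2)
  have hs : ContinuousOn s e.baseSet := e.continuousOn_symm_prodMk_left
  have hys : s (p y) = y :=
    e.symm_apply_mk_proj (e.mem_source.mpr (hsub (mem_ball_self (by positivity))))
  refine ((isCompact_closedBall (p y) ε).image_of_continuousOn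
    (hs.mono ((closedBall_subset_ball (by linarith)).trans hsub))).of_isClosed_subset
    isClosed_closedBall fun w hw => ?_
  obtain ⟨γ, hγ⟩ := hl.exists_path_eVariationOn_lt
    ((mem_closedBall'.mp hw).trans_lt (by linarith : ε < 2 * ε))
  have hγ_mem : ∀ t, p (γ t) ∈ e.baseSet := fun t => hsub <| by
    have := (eVariationOn.edist_le (p ∘ γ) (mem_univ 0) (mem_univ t)).trans_lt hγ
    rw [mem_ball, dist_comm, ← ofReal_lt_ofReal_iff (by positivity), ← edist_dist]
    simpa using this
  -- uniqueness of lifts: `γ` and `s ∘ p ∘ γ` both lift `p ∘ γ` from `y`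
  have hγ_eq : ⇑γ = s ∘ p ∘ γ :=
    hp.eq_of_comp_eq γ.continuous (hs.comp_continuous (hp.continuous.comp γ.continuous) hγ_mem)
      (funext fun t => (e.proj_symm_apply' (hγ_mem t)).symm) 0 (by simp [hys])
  exact ⟨p w, by simpa using hl.lipschitzWith.mapsTo_closedBall y ε hw,
    by simpa using (congrFun hγ_eq 1).symm⟩

end IsLiftedLengthMetric

lemma IsCoveringMap.exists_isOpen_trivialization {E X : Type*} [TopologicalSpace E]
    [TopologicalSpace X] {p : E → X} (hp : IsCoveringMap p) (a : X) :
    ∃ U, IsOpen U ∧ a ∈ U ∧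
      ∀ e, p e ∈ U → ∃ t : Bundle.Trivialization (p ⁻¹' {a}) p, t.baseSet = U := by
  obtain ⟨haU, hU, -, H, -⟩ := (hp a).2.choose_spec
  refine ⟨_, hU, haU, fun e he => ?_⟩
  -- `p` need not be surjective: a point over `U` is what makes the fibre over `a` nonempty
  have : Nonempty (p ⁻¹' {a}) := ⟨(H ⟨e, he⟩).2⟩
  exact ⟨(hp a).toTrivialization', rfl⟩

theorem universal_cover_balls_compact_general {N N' : Type*} [MetricSpace N] [MetricSpace N']
    [ProperSpace N]
    (p : N' → N) (hp : IsCoveringMap p)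
    (hlift : ∀ x y : N', ENNReal.ofReal (dist x y) =
      ⨅ γ : Path x y, eVariationOn (p ∘ ⇑γ) Set.univ) :
    ∀ (x : N') (r : ℝ), IsCompact (Metric.closedBall x r) := by
  intro x r
  have hl : IsLiftedLengthMetric p := hlift
  choose U hU_open hU_mem hU_triv using hp.exists_isOpen_trivialization
  obtain ⟨δ, hδ, hδU⟩ := lebesgue_number_lemma_of_metric (isCompact_closedBall (p x) r)
    hU_open fun a _ => mem_iUnion.mpr ⟨a, hU_mem a⟩
  refine hl.hasApproxIntermediatePoints.isCompact_closedBall (half_pos hδ) fun y hy => ?_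
  obtain ⟨a, ha⟩ := hδU (p y) (by simpa using hl.lipschitzWith.mapsTo_closedBall x r hy)
  obtain ⟨t, ht⟩ := hU_triv a y (ha (mem_ball_self hδ))
  exact hl.isCompact_closedBall_of_ball_subset_baseSet hp t (half_pos hδ)
    (by rwa [ht, mul_div_cancel₀ _ two_ne_zero])

/-- Let `N` be a complete, locally compact, proper length metric space and
`p : N' → N` a covering map with `N'` path-connected, where `N'` carries the lifted length
metric (the distance between two points of `N'` is the infimum over joining paths of the
length of the projected path).  Then every closed ball in `N'` is compact. -/
theorem universal_cover_balls_compact {N N' : Type*} [MetricSpace N] [MetricSpace N']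
    [CompleteSpace N] [LocallyCompactSpace N] [ProperSpace N] [PathConnectedSpace N']
    (p : N' → N) (hp : IsCoveringMap p)
    (hlength : ∀ x y : N, ∀ ε > (0 : ℝ), ∃ γ : Path x y,
      eVariationOn (⇑γ) Set.univ ≤ ENNReal.ofReal (dist x y + ε))
    (hlift : ∀ x y : N', ENNReal.ofReal (dist x y) =
      ⨅ γ : Path x y, eVariationOn (p ∘ ⇑γ) Set.univ) :
    ∀ (x : N') (r : ℝ), IsCompact (Metric.closedBall x r) :=
  universal_cover_balls_compact_general p hp hlift
end
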